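/- For every λ ∈ ℂ with λ ≠ 1, every integer n ≥ 1, and all x, the identity x^{n-1} = (1-λ)^{-n} · Σ_{k=0}^{n} Σ_{l=0}^{n-1} Σ_{l₁+⋯+l_n = l} C(l; l₁,…,l_n) · ( Π_{i=1}^{n} H_{l_i}(λ) ) · C(n, k) · C(n-1, l) · (-λ)^{n-k} · (x+k)^{n-1-l} holds as an identity of polynomials in x, where the inner sum is over all n-tuples (l₁,…,l_n) of nonnegative integers summing to l and C(l; l₁,…,l_n) = l!/(l₁!⋯l_n!) is the multinomial coefficient. -/

import Mathlib

/-- The formal power series `e^{ct} = ∑_{m≥0} c^m t^m / m!` over `ℂ`. -/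
noncomputable def expPS (c : ℂ) : PowerSeries ℂ :=
  PowerSeries.mk fun m => c ^ m / (m.factorial : ℂ)

/-!
Raising `(e^t - λ) F = 1 - λ`, with `F = ∑ H_m t^m/m!`, to the `n`-th power and multiplying by
`e^{xt}` gives `(1 - λ)^n e^{xt} = F^n ∑_k C(n,k) (-λ)^{n-k} e^{(x+k)t}`. Compare `N!` times the
coefficients of `t^N`: on the right this is a binomial convolution, and `l!` times the coefficient of
`t^l` in `F^n` is the multinomial sum of products of the `H_{l_i}`. Take `N = n - 1`.
-/

open PowerSeries Finset

theorem factorial_mul_coeff_mul {R : Type*} [CommSemiring R] (A B : R⟦X⟧) (N : ℕ) :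
    (N.factorial : R) * coeff N (A * B) =
      ∑ l ∈ range (N + 1), (N.choose l : R) *
        ((l.factorial : R) * coeff l A) * (((N - l).factorial : R) * coeff (N - l) B) := by
  rw [coeff_mul, Nat.sum_antidiagonal_eq_sum_range_succ_mk, mul_sum]
  refine sum_congr rfl fun l hl => ?_
  rw [← Nat.choose_mul_factorial_mul_factorial (Nat.lt_succ_iff.mp (mem_range.mp hl))]
  push_cast
  ring

theorem factorial_mul_coeff_pow_mk_div_factorial {K : Type*} [Field K] [CharZero K]
    (a : ℕ → K) (n l : ℕ) :
    (l.factorial : K) * coeff l ((mk fun m => a m / (m.factorial : K)) ^ n) =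
      ∑ t ∈ Nat.antidiagonalTuple n l, (Nat.multinomial univ t : K) * ∏ i : Fin n, a (t i) := by
  rw [← Fin.prod_const, coeff_prod, mul_sum]
  refine sum_nbij' (fun d => ⇑d) (fun t => Finsupp.equivFunOnFinite.symm t) ?_ ?_ ?_ ?_ ?_
  · intro d hd
    simpa [Nat.mem_antidiagonalTuple] using (mem_finsuppAntidiag.mp hd).1
  · intro t ht
    simpa [Nat.mem_antidiagonalTuple] using ht
  · intro d _
    exact Finsupp.equivFunOnFinite.symm_apply_apply d
  · intro t _
    rfl
  · intro d hd
    have hspec : ((∏ i : Fin n, ((d i).factorial : K)) * (Nat.multinomial univ ⇑d : K)) =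
        (l.factorial : K) := by
      rw [← (mem_finsuppAntidiag.mp hd).1]
      exact_mod_cast Nat.multinomial_spec univ ⇑d
    have hne : (∏ i : Fin n, ((d i).factorial : K)) ≠ 0 :=
      prod_ne_zero_iff.2 fun i _ => Nat.cast_ne_zero.2 (Nat.factorial_ne_zero _)
    simp only [coeff_mk, prod_div_distrib]
    rw [← hspec]
    field_simp

theorem expPS_eq_rescale_exp (c : ℂ) : expPS c = rescale c (exp ℂ) := by
  ext m
  simp [expPS, coeff_rescale, coeff_exp, div_eq_mul_inv, mul_comm]

theorem factorial_mul_coeff_expPS (c : ℂ) (m : ℕ) :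
    (m.factorial : ℂ) * coeff m (expPS c) = c ^ m := by
  simp [expPS, mul_div_cancel₀, Nat.factorial_ne_zero]

theorem expPS_mul_expPS (a b : ℂ) : expPS a * expPS b = expPS (a + b) := by
  simp [expPS_eq_rescale_exp, exp_mul_exp_eq_exp_add]

theorem expPS_one_pow (k : ℕ) : expPS 1 ^ k = expPS k := by
  rw [expPS_eq_rescale_exp, rescale_one, RingHom.id_apply, exp_pow_eq_rescale_exp,
    expPS_eq_rescale_exp]

theorem expPS_one_sub_C_pow_mul_expPS (lam x : ℂ) (n : ℕ) :
    (expPS 1 - C lam) ^ n * expPS x =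
      ∑ k ∈ range (n + 1), C ((n.choose k : ℂ) * (-lam) ^ (n - k)) * expPS (x + k) := by
  rw [sub_eq_add_neg, add_pow, sum_mul]
  refine sum_congr rfl fun k _ => ?_
  rw [← map_neg, ← map_pow, ← map_natCast C, expPS_one_pow, ← expPS_mul_expPS x k, map_mul]
  ring

theorem factorial_mul_coeff_sum_C_mul_expPS (c : ℕ → ℂ) (x : ℂ) (n m : ℕ) :
    (m.factorial : ℂ) * coeff m (∑ k ∈ range (n + 1), C (c k) * expPS (x + k)) =
      ∑ k ∈ range (n + 1), c k * (x + k) ^ m := by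
  simp only [map_sum, coeff_C_mul, mul_sum, mul_left_comm _ (c _), factorial_mul_coeff_expPS]

theorem sum_multinomial_frobeniusEuler_eq (lam : ℂ) (H : ℕ → ℂ)
    (hH : (expPS 1 - C lam) * mk (fun m => H m / (m.factorial : ℂ)) = C (1 - lam))
    (n N : ℕ) (x : ℂ) :
    ∑ k ∈ range (n + 1), ∑ l ∈ range (N + 1), ∑ t ∈ Nat.antidiagonalTuple n l,
        (Nat.multinomial univ t : ℂ) * (∏ i : Fin n, H (t i)) * (n.choose k : ℂ) *
          (N.choose l : ℂ) * (-lam) ^ (n - k) * (x + k) ^ (N - l) =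
      (1 - lam) ^ n * x ^ N := by
  have hkey : C ((1 - lam) ^ n) * expPS x =
      (mk fun m => H m / (m.factorial : ℂ)) ^ n *
        ∑ k ∈ range (n + 1), C ((n.choose k : ℂ) * (-lam) ^ (n - k)) * expPS (x + k) := by
    rw [← expPS_one_sub_C_pow_mul_expPS, ← mul_assoc, ← mul_pow, mul_comm (PowerSeries.mk _), hH,
      map_pow]
  have hcoeff := congrArg (fun A => (N.factorial : ℂ) * coeff N A) hkey
  simp only [coeff_C_mul, mul_left_comm _ ((1 - lam) ^ n), factorial_mul_coeff_expPS,
    factorial_mul_coeff_mul, factorial_mul_coeff_pow_mk_div_factorial,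
    factorial_mul_coeff_sum_C_mul_expPS] at hcoeff
  rw [hcoeff, sum_comm]
  simp only [mul_sum, sum_mul]
  refine sum_congr rfl fun l _ => sum_congr rfl fun k _ => sum_congr rfl fun t _ => ?_
  ring

/-- For `λ ≠ 1`, `n ≥ 1` and all `x`,
`x^{n-1} = (1-λ)^{-n} ∑_{k=0}^{n} ∑_{l=0}^{n-1} ∑_{l₁+⋯+l_n = l}
  C(l; l₁,…,l_n) (∏_{i=1}^{n} H_{l_i}(λ)) C(n,k) C(n-1,l) (-λ)^{n-k} (x+k)^{n-1-l}`,
where the Frobenius–Euler numbers `H_m(λ)` are characterized by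
`(1-λ)/(e^t-λ) = ∑_m H_m(λ) t^m/m!`, i.e. `(e^t-λ) ∑_m H_m(λ) t^m/m! = 1-λ`, and
`C(l; l₁,…,l_n)` is the multinomial coefficient. -/
theorem stmt12 (lam : ℂ) (hlam : lam ≠ 1) (n : ℕ) (hn : 1 ≤ n)
    (H : ℕ → ℂ)
    (hH : (expPS 1 - PowerSeries.C lam) *
          PowerSeries.mk (fun m => H m / (m.factorial : ℂ)) =
        PowerSeries.C (1 - lam)) :
    ∀ x : ℂ,
      x ^ (n - 1) =
        ((1 - lam) ^ n)⁻¹ *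
          ∑ k ∈ Finset.range (n + 1), ∑ l ∈ Finset.range n,
            ∑ t ∈ Finset.Nat.antidiagonalTuple n l,
              (Nat.multinomial Finset.univ t : ℂ) * (∏ i : Fin n, H (t i)) *
                (n.choose k : ℂ) * ((n - 1).choose l : ℂ) * (-lam) ^ (n - k) *
                (x + k) ^ (n - 1 - l) := by
  intro x
  obtain ⟨N, rfl⟩ : ∃ N, n = N + 1 := ⟨n - 1, by omega⟩
  rw [Nat.add_sub_cancel, sum_multinomial_frobeniusEuler_eq lam H hH,
    inv_mul_cancel_left₀ (pow_ne_zero _ (sub_ne_zero.2 hlam.symm))]
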